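/- arXiv:2507.03973 — 2 statements merged into one kernel-verified Lean document; each statement's English description precedes it below -/
import Mathlib

section
/- Let δ, δ' ∈ R^d with v = δ' - δ satisfying ‖v‖_1 ≤ Δ, and let ε > 0. Suppose for each coordinate i the quantization parameter satisfies b_i ≥ max(|δ_i|, |δ'_i|) + (1 + 1/ε)Δ. Then the randomized mechanism outputting independent bits c_i ∈ {-1,1} with P(c_i = 1 | x) = (b_i + x_i)/(2b_i) satisfies: for every bit string c ∈ {-1,1}^d, P(c | δ') ≤ e^ε · P(c | δ). That is, the mechanism is (ε, 0)-differentially private with respect to inputs δ and δ'. -/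
/-!
Write `P(c | x) = ∏ i, (b_i + c_i x_i) / (2 b_i)`. Moving one coordinate of the input from `δ_i`
to `δ'_i` raises the numerator `b_i + c_i δ_i` by at most `v_i = |δ'_i - δ_i|`, while the
numerator itself is at least `b_i - |δ_i| ≥ Δ / ε`. Hence the `i`-th factor grows by at most
`1 + ε v_i / Δ ≤ exp (ε v_i / Δ)`, and multiplying over `i` gives the factor
`exp (ε ∑ v_i / Δ) ≤ exp ε`.
-/

open Real Finset

noncomputable section

/-- `P(c | x)` for one coordinate of the compressor; the `else` branch is the bit `c = -1`. -/
def bitProb (b x c : ℝ) : ℝ :=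
  if c = 1 then (b + x) / (2 * b) else (b - x) / (2 * b)

lemma bitProb_of_sign {b x c : ℝ} (hc : c = 1 ∨ c = -1) :
    bitProb b x c = (b + c * x) / (2 * b) := by
  rcases hc with rfl | rfl
  · simp [bitProb]
  · norm_num [bitProb, sub_eq_add_neg]

lemma abs_eq_one_of_sign {c : ℝ} (hc : c = 1 ∨ c = -1) : |c| = 1 := by
  rcases hc with rfl | rfl <;> simp

lemma bitProb_nonneg {b x c : ℝ} (hc : c = 1 ∨ c = -1) (hx : |x| ≤ b) :
    0 ≤ bitProb b x c := by
  rw [bitProb_of_sign hc]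
  have hcx : -|x| ≤ c * x := by
    simpa [abs_mul, abs_eq_one_of_sign hc] using neg_abs_le (c * x)
  have hb : 0 ≤ b := (abs_nonneg x).trans hx
  exact div_nonneg (by linarith) (by linarith)

lemma le_exp_mul_of_le_add_mul {y y' t : ℝ} (hy : 0 ≤ y) (h : y' ≤ y + t * y) :
    y' ≤ exp t * y :=
  calc y' ≤ (t + 1) * y := by linarith
    _ ≤ exp t * y := mul_le_mul_of_nonneg_right (add_one_le_exp t) hy

/-- At `Δ = 0` this holds through `v = 0` and the junk value `x / 0 = 0`. -/
lemma le_mul_div_mul_div_of_le {v Δ ε : ℝ} (hε : ε ≠ 0) (hv : 0 ≤ v) (hvΔ : v ≤ Δ) :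
    v ≤ ε * v / Δ * (Δ / ε) := by
  rcases (hv.trans hvΔ).eq_or_lt with rfl | hΔ
  · simp [le_antisymm hvΔ hv]
  · exact (by field_simp : ε * v / Δ * (Δ / ε) = v).ge

lemma bitProb_le_exp_mul_bitProb {b x x' c ε Δ : ℝ} (hc : c = 1 ∨ c = -1) (hε : 0 < ε)
    (hxx' : |x' - x| ≤ Δ) (hb : |x| + Δ / ε ≤ b) :
    bitProb b x' c ≤ exp (ε * |x' - x| / Δ) * bitProb b x c := by
  set t := ε * |x' - x| / Δ
  have hΔ : 0 ≤ Δ := (abs_nonneg _).trans hxx'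
  have ht : 0 ≤ t := by positivity
  have hcx : -|x| ≤ c * x := by
    simpa [abs_mul, abs_eq_one_of_sign hc] using neg_abs_le (c * x)
  have hcx' : c * (x' - x) ≤ |x' - x| := by
    simpa [abs_mul, abs_eq_one_of_sign hc] using le_abs_self (c * (x' - x))
  have hmargin : Δ / ε ≤ b + c * x := by linarith
  have hy : 0 ≤ b + c * x := (div_nonneg hΔ hε.le).trans hmargin
  have hshift : |x' - x| ≤ t * (b + c * x) :=
    calc |x' - x| ≤ t * (Δ / ε) := le_mul_div_mul_div_of_le hε.ne' (abs_nonneg _) hxx'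
      _ ≤ t * (b + c * x) := mul_le_mul_of_nonneg_left hmargin ht
  have hnum : b + c * x' ≤ exp t * (b + c * x) :=
    le_exp_mul_of_le_add_mul hy (by linarith)
  rw [bitProb_of_sign hc, bitProb_of_sign hc, ← mul_div_assoc]
  exact div_le_div_of_nonneg_right hnum (by linarith [abs_nonneg x, div_nonneg hΔ hε.le])

lemma prod_le_exp_sum_mul_prod {ι : Type*} (s : Finset ι) {p q t : ι → ℝ}
    (hq : ∀ i ∈ s, 0 ≤ q i) (hqp : ∀ i ∈ s, q i ≤ exp (t i) * p i) :
    ∏ i ∈ s, q i ≤ exp (∑ i ∈ s, t i) * ∏ i ∈ s, p i :=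
  calc ∏ i ∈ s, q i ≤ ∏ i ∈ s, exp (t i) * p i := prod_le_prod hq hqp
    _ = exp (∑ i ∈ s, t i) * ∏ i ∈ s, p i := by rw [prod_mul_distrib, exp_sum]

lemma sum_mul_div_le {ι : Type*} (s : Finset ι) {v : ι → ℝ} {ε Δ : ℝ} (hε : 0 ≤ ε)
    (hΔ : 0 ≤ Δ) (hv : ∑ i ∈ s, v i ≤ Δ) :
    ∑ i ∈ s, ε * v i / Δ ≤ ε := by
  rw [← sum_div, ← mul_sum, mul_div_assoc]
  exact mul_le_of_le_one_right hε (div_le_one_of_le₀ hv hΔ)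

end

/-- `(ε,0)`-differential privacy of the stochastic one-bit compressor: for adjacent inputs
`δ, δ'` with `‖δ' - δ‖₁ ≤ Δ` and quantization parameters
`b_i ≥ max(|δ_i|, |δ'_i|) + (1 + 1/ε)Δ`, the probability of any output bit string `c`
satisfies `P(c | δ') ≤ e^ε · P(c | δ)`, where
`P(c | x) = ∏ i, (b_i + c_i·x_i)/(2b_i)` for `c_i ∈ {-1, 1}`. -/
theorem stmt7 (d : ℕ) (ε Δ : ℝ) (hε : 0 < ε)
    (δ δ' b : Fin d → ℝ)
    (hsens : ∑ i, |δ' i - δ i| ≤ Δ)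
    (hb : ∀ i, b i ≥ max |δ i| |δ' i| + (1 + 1 / ε) * Δ) :
    ∀ c : Fin d → ℝ, (∀ i, c i = 1 ∨ c i = -1) →
      (∏ i, (if c i = 1 then (b i + δ' i) / (2 * b i) else (b i - δ' i) / (2 * b i)))
        ≤ Real.exp ε *
          ∏ i, (if c i = 1 then (b i + δ i) / (2 * b i) else (b i - δ i) / (2 * b i)) := by
  intro c hc
  have hΔ : 0 ≤ Δ := (sum_nonneg fun i _ => abs_nonneg _).trans hsens
  have hmargin : ∀ i, max |δ i| |δ' i| + Δ / ε ≤ b i := fun i => by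
    have : (1 + 1 / ε) * Δ = Δ + Δ / ε := by ring
    linarith [hb i, div_nonneg hΔ hε.le]
  have hδ : ∀ i, |δ i| + Δ / ε ≤ b i := fun i =>
    (add_le_add_left (le_max_left _ _) _).trans (hmargin i)
  have hδ' : ∀ i, |δ' i| ≤ b i := fun i =>
    (le_max_right _ _).trans (le_of_add_le_of_nonneg_left (hmargin i) (div_nonneg hΔ hε.le))
  have hv : ∀ i, |δ' i - δ i| ≤ Δ := fun i =>
    (single_le_sum (fun j _ => abs_nonneg (δ' j - δ j)) (mem_univ i)).trans hsens
  calc ∏ i, bitProb (b i) (δ' i) (c i)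
      ≤ exp (∑ i, ε * |δ' i - δ i| / Δ) * ∏ i, bitProb (b i) (δ i) (c i) :=
        prod_le_exp_sum_mul_prod _ (fun i _ => bitProb_nonneg (hc i) (hδ' i))
          (fun i _ => bitProb_le_exp_mul_bitProb (hc i) hε (hv i) (hδ i))
    _ ≤ exp ε * ∏ i, bitProb (b i) (δ i) (c i) := by
        have hp : 0 ≤ ∏ i, bitProb (b i) (δ i) (c i) := prod_nonneg fun i _ =>
          bitProb_nonneg (hc i) ((le_add_of_nonneg_right (div_nonneg hΔ hε.le)).trans (hδ i))
        gcongr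
        exact sum_mul_div_le _ hε.le hΔ hsens
end

section
/- Let F : R^d → R be L-Lipschitz smooth, and suppose w̄ - w = -(1/λ)(∇F(w) + G) where ‖w̄ - w‖ ≤ (B(1+γ)/λ̄)‖∇F(w)‖ and ‖G‖ ≤ (L(1+γ)/λ̄ + γ)B‖∇F(w)‖. Then F(w̄) ≤ F(w) - ((1 - γB)/λ - LB(1+γ)/(λ̄λ) - L(1+γ)²B²/(2λ̄²))·‖∇F(w)‖². -/
open InnerProductSpace Set

lemma descent_aux {d : ℕ} (F : EuclideanSpace ℝ (Fin d) → ℝ)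
    (hFdiff : Differentiable ℝ F) (L : ℝ) (hL : 0 ≤ L)
    (hLip : ∀ x y, ‖gradient F x - gradient F y‖ ≤ L * ‖x - y‖)
    (x y : EuclideanSpace ℝ (Fin d)) :
    F y ≤ F x + inner ℝ (gradient F x) (y - x) + L / 2 * ‖y - x‖ ^ 2 := by
  set v := y - x with hv
  set g : ℝ → ℝ := fun t => F (x + t • v) - F x - t * inner ℝ (gradient F x) v with hg
  have hcurve : ∀ t : ℝ, HasDerivAt (fun s : ℝ => x + s • v) v t := by
    intro t
    simpa using ((hasDerivAt_id t).smul_const v).const_add x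
  have hgd : ∀ t : ℝ, HasDerivAt g
      ((inner ℝ (gradient F (x + t • v)) v : ℝ) - inner ℝ (gradient F x) v) t := by
    intro t
    have h1 : HasDerivAt (fun s : ℝ => F (x + s • v))
        ((inner ℝ (gradient F (x + t • v)) v : ℝ)) t := by
      have := ((hFdiff (x + t • v)).hasGradientAt.hasFDerivAt).comp_hasDerivAt t (hcurve t)
      simpa [Function.comp_def] using this
    have h2 : HasDerivAt (fun s : ℝ => F x + s * (inner ℝ (gradient F x) v : ℝ))
        ((inner ℝ (gradient F x) v : ℝ)) t := by
      simpa using ((hasDerivAt_id t).mul_const (inner ℝ (gradient F x) v : ℝ)).const_add (F x)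
    simpa [hg, sub_sub, Pi.sub_def] using h1.sub h2
  have key : ‖g 1‖ ≤ L / 2 * ‖v‖ ^ 2 * 1 ^ 2 := by
    have := image_norm_le_of_norm_deriv_right_le_deriv_boundary
      (f := g) (a := (0:ℝ)) (b := 1)
      (f' := fun t => (inner ℝ (gradient F (x + t • v)) v : ℝ) - inner ℝ (gradient F x) v)
      (fun t _ => (hgd t).continuousAt.continuousWithinAt)
      (fun t _ => (hgd t).hasDerivWithinAt)
      (B := fun t => L / 2 * ‖v‖ ^ 2 * t ^ 2) (B' := fun t => L * ‖v‖ ^ 2 * t)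
      ?ha ?hB ?bound (mem_Icc.mpr ⟨zero_le_one, le_refl 1⟩)
    · exact this
    · simp [hg]
    · intro t
      have : HasDerivAt (fun t : ℝ => L / 2 * ‖v‖ ^ 2 * t ^ 2)
          (L / 2 * ‖v‖ ^ 2 * (2 * t)) t := by
        simpa using (hasDerivAt_pow 2 t).const_mul (L / 2 * ‖v‖ ^ 2)
      convert this using 1; ring
    · intro t ht
      have h0 : (inner ℝ (gradient F (x + t • v)) v : ℝ) - inner ℝ (gradient F x) v
          = inner ℝ (gradient F (x + t • v) - gradient F x) v := by
        rw [inner_sub_left]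
      simp only [Real.norm_eq_abs]
      rw [h0]
      calc |(inner ℝ (gradient F (x + t • v) - gradient F x) v : ℝ)|
          ≤ ‖gradient F (x + t • v) - gradient F x‖ * ‖v‖ := abs_real_inner_le_norm _ _
        _ ≤ (L * ‖(x + t • v) - x‖) * ‖v‖ := by
            exact mul_le_mul_of_nonneg_right (hLip _ _) (norm_nonneg _)
        _ = L * ‖v‖ ^ 2 * t := by
            have : ‖(x + t • v) - x‖ = t * ‖v‖ := by
              simp [norm_smul, abs_of_nonneg ht.1]
            rw [this]; ring
  have h1 : g 1 ≤ L / 2 * ‖v‖ ^ 2 := by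
    have := (abs_le.mp (by simpa [Real.norm_eq_abs] using key)).2
    simpa using this
  have : F (x + (1:ℝ) • v) - F x - 1 * inner ℝ (gradient F x) v ≤ L / 2 * ‖v‖ ^ 2 := h1
  simp only [one_smul, one_mul] at this
  have hxy : x + v = y := by rw [hv]; abel
  rw [hxy] at this
  linarith

/-- Descent lemma for lossless FedAvg aggregation: if `F` is differentiable with
`L`-Lipschitz gradient, `w̄ - w = -(1/λ)(∇F(w) + G)`,
`‖w̄ - w‖ ≤ (B(1+γ)/λ̄)‖∇F(w)‖`, and `‖G‖ ≤ (L(1+γ)/λ̄ + γ)B‖∇F(w)‖`, then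
`F(w̄) ≤ F(w) - ((1-γB)/λ - LB(1+γ)/(λ̄λ) - L(1+γ)²B²/(2λ̄²))‖∇F(w)‖²`. -/
theorem stmt10 {d : ℕ} (F : EuclideanSpace ℝ (Fin d) → ℝ)
    (hFdiff : Differentiable ℝ F)
    (L lam lamBar B γ : ℝ) (hL : 0 ≤ L) (hlam : 0 < lam) (hlamBar : 0 < lamBar)
    (hB : 0 ≤ B) (hγ : 0 ≤ γ)
    (hLip : ∀ x y, ‖gradient F x - gradient F y‖ ≤ L * ‖x - y‖)
    (w wbar : EuclideanSpace ℝ (Fin d)) (G : EuclideanSpace ℝ (Fin d))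
    (hupd : wbar - w = -(1 / lam) • (gradient F w + G))
    (hstep : ‖wbar - w‖ ≤ (B * (1 + γ) / lamBar) * ‖gradient F w‖)
    (hG : ‖G‖ ≤ (L * (1 + γ) / lamBar + γ) * B * ‖gradient F w‖) :
    F wbar ≤ F w -
      ((1 - γ * B) / lam - L * B * (1 + γ) / (lamBar * lam)
        - L * (1 + γ) ^ 2 * B ^ 2 / (2 * lamBar ^ 2)) * ‖gradient F w‖ ^ 2 := by
  set n := ‖gradient F w‖ with hn
  have hn0 : 0 ≤ n := norm_nonneg _
  have hdesc := descent_aux F hFdiff L hL hLip w wbar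
  have hinner : (inner ℝ (gradient F w) (wbar - w) : ℝ)
      = -(1 / lam) * (n ^ 2 + inner ℝ (gradient F w) G) := by
    rw [hupd, real_inner_smul_right, inner_add_right, real_inner_self_eq_norm_sq]
  set i := (inner ℝ (gradient F w) G : ℝ) with hi
  have hiLB : -((L * (1 + γ) / lamBar + γ) * B * n ^ 2) ≤ i := by
    have h1 : |i| ≤ ‖gradient F w‖ * ‖G‖ := abs_real_inner_le_norm _ _
    have h2 : ‖gradient F w‖ * ‖G‖ ≤ n * ((L * (1 + γ) / lamBar + γ) * B * n) :=
      mul_le_mul_of_nonneg_left hG hn0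
    nlinarith [neg_abs_le i]
  have hs2 : ‖wbar - w‖ ^ 2 ≤ (B * (1 + γ) / lamBar) ^ 2 * n ^ 2 := by
    have := mul_self_le_mul_self (norm_nonneg (wbar - w)) hstep
    nlinarith [this]
  have hLs : L / 2 * ‖wbar - w‖ ^ 2 ≤ L / 2 * ((B * (1 + γ) / lamBar) ^ 2 * n ^ 2) :=
    mul_le_mul_of_nonneg_left hs2 (by linarith)
  have hlaminv : (0:ℝ) < 1 / lam := by positivity
  have hmul : -(1 / lam) * (n ^ 2 + i)
      ≤ -(1 / lam) * n ^ 2 + (1 / lam) * ((L * (1 + γ) / lamBar + γ) * B * n ^ 2) := by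
    nlinarith [mul_le_mul_of_nonneg_left hiLB (le_of_lt hlaminv)]
  have hcoef : -(1 / lam) * n ^ 2 + (1 / lam) * ((L * (1 + γ) / lamBar + γ) * B * n ^ 2)
      + L / 2 * ((B * (1 + γ) / lamBar) ^ 2 * n ^ 2)
      = -(((1 - γ * B) / lam - L * B * (1 + γ) / (lamBar * lam)
        - L * (1 + γ) ^ 2 * B ^ 2 / (2 * lamBar ^ 2)) * n ^ 2) := by
    field_simp
    ring
  rw [hinner] at hdesc
  linarith
end
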